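/- For every approval instance and every committee size k with k < |C|, there exist a committee W ⊆ C with |W| = k and a candidate c ∈ C∖W such that W satisfies EJR+ with respect to committee size k and W ∪ {c} satisfies EJR+ with respect to committee size k+1. -/

import Mathlib

/-- A committee `W` (with `|W| ≤ k`) satisfies EJR+ w.r.t. committee size `k`. -/
def EJRplus {V C : Type*} [Fintype V] [DecidableEq C]
    (A : V → Finset C) (k : ℕ) (W : Finset C) : Prop :=
  ¬ ∃ (c : C) (N' : Finset V) (ℓ : ℕ), 1 ≤ ℓ ∧ c ∉ W ∧
      (ℓ : ℚ) * (Fintype.card V) / k ≤ N'.card ∧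
      (∀ i ∈ N', c ∈ A i ∧ (A i ∩ W).card < ℓ)


/-
Let `W` be a size-`k` committee maximising the PAV score `∑ᵢ H(|Aᵢ ∩ W|)` and let `c ∉ W` have the
largest marginal gain `gain(c) = ∑_{i : c ∈ Aᵢ} 1 / (|Aᵢ ∩ W| + 1)`. Summing the score changes of
the `k` swaps `W - w + d` shows `(k + 1) · gain(d) ≤ n` for every `d ∉ W`. A group violating EJR+
for `W` (size `k`) would force `gain(d) ≥ n / k`, which is impossible. A group violating EJR+ for
`W + c` (size `k + 1`) forces `gain(d) ≥ n / (k + 1)`, so every inequality is tight: then a swap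
`W - w + c`, with `w` approved by a member of the group, is again PAV-optimal, and for it the group
gives `d` a strictly larger gain, a contradiction.
-/

open Finset

section Swap

variable {C : Type*} [DecidableEq C]

lemma card_insert_erase {W : Finset C} {c w : C} (hc : c ∉ W) (hw : w ∈ W) :
    (insert c (W.erase w)).card = W.card := by
  rw [card_insert_of_notMem fun h => hc (mem_of_mem_erase h), card_erase_add_one hw]

lemma card_inter_insert_erase (B W : Finset C) {c w : C} (hc : c ∉ W) (hw : w ∈ W) :
    (B ∩ insert c (W.erase w)).card + (if w ∈ B then 1 else 0) =
      (B ∩ W).card + (if c ∈ B then 1 else 0) := by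
  have hins : (B ∩ insert c (W.erase w)).card =
      (B ∩ W.erase w).card + if c ∈ B then 1 else 0 := by
    split_ifs with hcB
    · rw [inter_insert_of_mem hcB,
        card_insert_of_notMem fun h => hc (mem_of_mem_erase (mem_inter.1 h).2)]
    · rw [inter_insert_of_notMem hcB, add_zero]
  have herase : (B ∩ W.erase w).card + (if w ∈ B then 1 else 0) = (B ∩ W).card := by
    rw [inter_erase]
    split_ifs with hwB
    · exact card_erase_add_one (mem_inter.2 ⟨hwB, hw⟩)
    · rw [erase_eq_of_notMem fun h => hwB (mem_inter.1 h).1, add_zero]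
  omega

lemma sum_harmonic_insert_erase_sub (B W : Finset C) {c : C} (hc : c ∉ W) :
    ∑ w ∈ W, (harmonic (B ∩ insert c (W.erase w)).card - harmonic (B ∩ W).card) =
      (if c ∈ B then ((W.card : ℚ) + 1) * ((B ∩ W).card + 1 : ℚ)⁻¹ else 0) -
        if c ∈ B ∨ (B ∩ W).Nonempty then 1 else 0 := by
  set u := (B ∩ W).card with hu
  have hterm : ∀ w ∈ W, harmonic (B ∩ insert c (W.erase w)).card - harmonic u =
      if w ∈ B then (if c ∈ B then 0 else -(u : ℚ)⁻¹)
      else (if c ∈ B then ((u : ℚ) + 1)⁻¹ else 0) := by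
    intro w hw
    have hcard := card_inter_insert_erase B W hc hw
    generalize (B ∩ insert c (W.erase w)).card = s at hcard ⊢
    split_ifs at hcard ⊢
    · rw [show s = u by omega, sub_self]
    · rw [show u = s + 1 by omega, harmonic_succ]; push_cast; ring
    · rw [show s = u + 1 by omega, harmonic_succ]; push_cast; ring
    · rw [show s = u by omega, sub_self]
  have hin : (W.filter (· ∈ B)).card = u := by rw [filter_mem_eq_inter, inter_comm]
  have hout : (W.filter (· ∉ B)).card = W.card - u := by
    rw [filter_not, card_sdiff_of_subset (filter_subset _ _), hin]
  rw [sum_congr rfl hterm, sum_ite, sum_const, sum_const, hin, hout, nsmul_eq_mul, nsmul_eq_mul,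
    Nat.cast_sub (card_le_card inter_subset_right)]
  by_cases hcB : c ∈ B
  · simp only [hcB, if_true, true_or]
    field_simp
    ring
  · rcases Nat.eq_zero_or_pos u with hu0 | hu0
    · simp [hcB, hu0, card_eq_zero.1 hu0]
    · have : (u : ℚ) ≠ 0 := by positivity
      simp only [hcB, ↓reduceIte, mul_neg, mul_zero, add_zero, ← card_pos, ← hu, hu0, or_true,
        zero_sub, neg_inj]
      field_simp

end Swap

section PAV

variable {V C : Type*} [Fintype V] [DecidableEq C]

def pavScore (A : V → Finset C) (W : Finset C) : ℚ :=
  ∑ i, harmonic (A i ∩ W).card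

/-- The increase of `pavScore A W` caused by adding `c ∉ W`. -/
def pavGain (A : V → Finset C) (W : Finset C) (c : C) : ℚ :=
  ∑ i with c ∈ A i, ((A i ∩ W).card + 1 : ℚ)⁻¹

def IsPAVOptimal (A : V → Finset C) (k : ℕ) (W : Finset C) : Prop :=
  W.card = k ∧ ∀ S : Finset C, S.card = k → pavScore A S ≤ pavScore A W

lemma exists_isPAVOptimal [Fintype C] (A : V → Finset C) {k : ℕ} (hk : k ≤ Fintype.card C) :
    ∃ W, IsPAVOptimal A k W := by
  obtain ⟨W, hW, hmax⟩ := exists_max_image (powersetCard k univ) (pavScore A)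
    (powersetCard_nonempty.2 (by simpa using hk))
  exact ⟨W, (mem_powersetCard.1 hW).2, fun S hS => hmax S (mem_powersetCard.2 ⟨subset_univ S, hS⟩)⟩

lemma sum_pavScore_insert_erase_sub (A : V → Finset C) (W : Finset C) {c : C} (hc : c ∉ W) :
    ∑ w ∈ W, (pavScore A (insert c (W.erase w)) - pavScore A W) =
      (W.card + 1) * pavGain A W c - #{i | c ∈ A i ∨ (A i ∩ W).Nonempty} := by
  simp only [pavScore, ← sum_sub_distrib]
  rw [sum_comm]
  simp only [sum_harmonic_insert_erase_sub _ _ hc]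
  rw [sum_sub_distrib, sum_boole, pavGain, mul_sum, sum_filter]

lemma pavGain_anti {A : V → Finset C} {S T : Finset C} (hST : S ⊆ T) (d : C) :
    pavGain A T d ≤ pavGain A S d :=
  sum_le_sum fun i _ => inv_anti₀ (by positivity) (by gcongr)

lemma pavGain_lt_pavGain {A : V → Finset C} {S T : Finset C} {d x : C} {i : V} (hST : S ⊆ T)
    (hi : d ∈ A i) (hxT : x ∈ A i ∩ T) (hxS : x ∉ S) : pavGain A T d < pavGain A S d := by
  refine sum_lt_sum (fun j _ => inv_anti₀ (by positivity) ?_) ⟨i, mem_filter.2 ⟨mem_univ i, hi⟩,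
    inv_strictAnti₀ (by positivity) ?_⟩
  · gcongr
  · have hss : A i ∩ S ⊂ A i ∩ T := ssubset_of_subset_of_ne (inter_subset_inter_left hST)
      fun h => hxS (mem_inter.1 (h ▸ hxT)).2
    exact add_lt_add_left (by exact_mod_cast card_lt_card hss) 1

lemma card_div_le_pavGain {A : V → Finset C} {S : Finset C} {d : C} {N' : Finset V} {ℓ : ℕ}
    (hN' : ∀ i ∈ N', d ∈ A i ∧ (A i ∩ S).card < ℓ) : (N'.card : ℚ) / ℓ ≤ pavGain A S d :=
  calc (N'.card : ℚ) / ℓ = ∑ _i ∈ N', (ℓ : ℚ)⁻¹ := by rw [sum_const, nsmul_eq_mul, div_eq_mul_inv]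
    _ ≤ ∑ i ∈ N', ((A i ∩ S).card + 1 : ℚ)⁻¹ :=
      sum_le_sum fun i hi => inv_anti₀ (by positivity) (by exact_mod_cast (hN' i hi).2)
    _ ≤ pavGain A S d := sum_le_sum_of_subset_of_nonneg
      (fun i hi => mem_filter.2 ⟨mem_univ i, (hN' i hi).1⟩) fun _ _ _ => by positivity

namespace IsPAVOptimal

variable {A : V → Finset C} {k : ℕ} {W : Finset C} {c : C}

lemma mul_pavGain_le_card_filter (hW : IsPAVOptimal A k W) (hc : c ∉ W) :
    (k + 1) * pavGain A W c ≤ #{i | c ∈ A i ∨ (A i ∩ W).Nonempty} := by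
  have hswap : ∑ w ∈ W, (pavScore A (insert c (W.erase w)) - pavScore A W) ≤ 0 :=
    sum_nonpos fun w hw => sub_nonpos.2 <| hW.2 _ <| by rw [card_insert_erase hc hw, hW.1]
  rw [sum_pavScore_insert_erase_sub A W hc, hW.1] at hswap
  linarith

lemma mul_pavGain_le (hW : IsPAVOptimal A k W) (hc : c ∉ W) :
    (k + 1) * pavGain A W c ≤ Fintype.card V :=
  (hW.mul_pavGain_le_card_filter hc).trans (by exact_mod_cast card_le_univ _)

lemma insert_erase (hW : IsPAVOptimal A k W) (hc : c ∉ W)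
    (hgain : (k + 1) * pavGain A W c = Fintype.card V) {w : C} (hw : w ∈ W) :
    IsPAVOptimal A k (insert c (W.erase w)) := by
  have hle : ∀ w ∈ W, pavScore A (insert c (W.erase w)) - pavScore A W ≤ 0 := fun w hw =>
    sub_nonpos.2 <| hW.2 _ <| by rw [card_insert_erase hc hw, hW.1]
  have hsum : ∑ w ∈ W, (pavScore A (insert c (W.erase w)) - pavScore A W) = 0 := by
    refine le_antisymm (sum_nonpos hle) ?_
    have : (#{i | c ∈ A i ∨ (A i ∩ W).Nonempty} : ℚ) ≤ Fintype.card V := by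
      exact_mod_cast card_le_univ _
    rw [sum_pavScore_insert_erase_sub A W hc, hW.1]
    linarith
  have hw0 := (sum_eq_zero_iff_of_nonpos hle).1 hsum w hw
  exact ⟨by rw [card_insert_erase hc hw, hW.1], fun S hS => (hW.2 S hS).trans (by linarith)⟩

lemma inter_nonempty (hW : IsPAVOptimal A k W) (hc : c ∉ W)
    (hgain : (k + 1) * pavGain A W c = Fintype.card V) {i : V} (hci : c ∉ A i) :
    (A i ∩ W).Nonempty := by
  have hcard : #{i | c ∈ A i ∨ (A i ∩ W).Nonempty} = Fintype.card V :=
    le_antisymm (card_le_univ _) (by exact_mod_cast hgain ▸ hW.mul_pavGain_le_card_filter hc)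
  have hi := eq_univ_of_card _ hcard ▸ mem_univ i
  exact ((mem_filter.1 hi).2).resolve_left hci

theorem ejrPlus (hW : IsPAVOptimal A k W) (hk : 1 ≤ k) (hn : 1 ≤ Fintype.card V) :
    EJRplus A k W := by
  rintro ⟨c, N', ℓ, hℓ, hc, hsize, hN'⟩
  have hthr : (Fintype.card V : ℚ) / k ≤ N'.card / ℓ :=
    calc (Fintype.card V : ℚ) / k = ℓ * Fintype.card V / k / ℓ := by field_simp
      _ ≤ N'.card / ℓ := by gcongr
  have hgain : (k + 1 : ℚ) * (Fintype.card V / k) ≤ Fintype.card V :=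
    (mul_le_mul_of_nonneg_left (hthr.trans (card_div_le_pavGain hN')) (by positivity)).trans
      (hW.mul_pavGain_le hc)
  have hsplit : (k + 1 : ℚ) * (Fintype.card V / k) = Fintype.card V + Fintype.card V / k := by
    field_simp
  have : (0 : ℚ) < Fintype.card V / k := by positivity
  linarith

lemma exists_subset_insert_notMem_of_tight (hW : IsPAVOptimal A k W) (hc : c ∉ W)
    (hmax : ∀ d ∉ W, pavGain A W d ≤ pavGain A W c) {d : C} (hd : d ∉ insert c W)
    (htight : Fintype.card V ≤ (k + 1) * pavGain A (insert c W) d) (i : V) :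
    ∃ S, IsPAVOptimal A k S ∧ S ⊆ insert c W ∧ ∃ x ∈ A i ∩ insert c W, x ∉ S := by
  by_cases hci : c ∈ A i
  · exact ⟨W, hW, subset_insert c W, c, mem_inter.2 ⟨hci, mem_insert_self c W⟩, hc⟩
  have hgain : (k + 1) * pavGain A W c = Fintype.card V := by
    refine le_antisymm (hW.mul_pavGain_le hc) (htight.trans (mul_le_mul_of_nonneg_left ?_ ?_))
    · exact (pavGain_anti (subset_insert c W) d).trans (hmax d fun h => hd (mem_insert_of_mem h))
    · positivity
  obtain ⟨w, hw⟩ := hW.inter_nonempty hc hgain hci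
  obtain ⟨hwA, hwW⟩ := mem_inter.1 hw
  refine ⟨insert c (W.erase w), hW.insert_erase hc hgain hwW,
    insert_subset_insert c (erase_subset w W), w, mem_inter.2 ⟨hwA, mem_insert_of_mem hwW⟩, ?_⟩
  exact fun h => (mem_insert.1 h).elim (fun hwc => hc (hwc ▸ hwW)) (notMem_erase w W)

theorem ejrPlus_insert (hW : IsPAVOptimal A k W) (hn : 1 ≤ Fintype.card V) (hc : c ∉ W)
    (hmax : ∀ d ∉ W, pavGain A W d ≤ pavGain A W c) : EJRplus A (k + 1) (insert c W) := by
  rintro ⟨d, N', ℓ, hℓ, hdT, hsize, hN'⟩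
  have hthr : (Fintype.card V : ℚ) ≤ (k + 1) * (N'.card / ℓ) := by
    push_cast at hsize
    calc (Fintype.card V : ℚ) = (k + 1) * (ℓ * Fintype.card V / (k + 1) / ℓ) := by field_simp
      _ ≤ (k + 1) * (N'.card / ℓ) := by gcongr
  obtain ⟨i₀, hi₀⟩ : N'.Nonempty := by
    rw [nonempty_iff_ne_empty]
    rintro rfl
    simp only [card_empty, CharP.cast_eq_zero, zero_div, mul_zero] at hthr
    exact absurd hthr (by exact_mod_cast Nat.not_le.2 hn)
  have hgroup : (N'.card : ℚ) / ℓ ≤ pavGain A (insert c W) d := card_div_le_pavGain hN'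
  obtain ⟨S, hS, hST, x, hxT, hxS⟩ := hW.exists_subset_insert_notMem_of_tight hc hmax hdT
    (hthr.trans (mul_le_mul_of_nonneg_left hgroup (by positivity))) i₀
  have hlt := pavGain_lt_pavGain hST (hN' i₀ hi₀).1 hxT hxS
  have hle := hS.mul_pavGain_le fun h => hdT (hST h)
  have : (k + 1 : ℚ) * (N'.card / ℓ) < (k + 1) * pavGain A S d :=
    mul_lt_mul_of_pos_left (hgroup.trans_lt hlt) (by positivity)
  linarith

end IsPAVOptimal

end PAV

theorem ejrplus_committee_monotone_general {V C : Type*} [Fintype V] [Fintype C]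
    [DecidableEq C]
    (A : V → Finset C) (k : ℕ)
    (hn : 1 ≤ Fintype.card V) (hk1 : 1 ≤ k) (hk2 : k < Fintype.card C) :
    ∃ (W : Finset C) (c : C), W.card = k ∧ c ∉ W ∧
      EJRplus A k W ∧ EJRplus A (k + 1) (insert c W) := by
  obtain ⟨W, hW⟩ := exists_isPAVOptimal A hk2.le
  have hrest : (univ \ W).Nonempty := by
    rw [← card_pos, card_univ_sdiff, hW.1]
    omega
  obtain ⟨c, hcW, hmax⟩ := exists_max_image (univ \ W) (pavGain A W) hrest
  have hc : c ∉ W := (mem_sdiff.1 hcW).2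
  exact ⟨W, c, hW.1, hc, hW.ejrPlus hk1 hn,
    hW.ejrPlus_insert hn hc fun d hd => hmax d (mem_sdiff.2 ⟨mem_univ d, hd⟩)⟩

/-- for every approval instance and committee size `k < |C|` there
are a committee `W` of size `k` and a candidate `c ∉ W` such that `W` satisfies
EJR+ w.r.t. size `k` and `W ∪ {c}` satisfies EJR+ w.r.t. size `k + 1`. -/
theorem ejrplus_committee_monotone {V C : Type*} [Fintype V] [Fintype C]
    [DecidableEq V] [DecidableEq C]
    (A : V → Finset C) (k : ℕ)
    (hn : 1 ≤ Fintype.card V) (hk1 : 1 ≤ k) (hk2 : k < Fintype.card C) :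
    ∃ (W : Finset C) (c : C), W.card = k ∧ c ∉ W ∧
      EJRplus A k W ∧ EJRplus A (k + 1) (insert c W) :=
  ejrplus_committee_monotone_general A k hn hk1 hk2
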